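/- arXiv:math/0404526 — 4 statements merged into one kernel-verified Lean document; each statement's English description precedes it below -/
import Mathlib

section
/- Let X be a Banach lattice, 1 < p < ∞, and C > 0, and suppose that every normalized pairwise disjoint sequence in X has a subsequence with an upper p-estimate with constant C. Let {e_i}_{i≥1} be a normalized pairwise disjoint sequence in X which is 1-symmetric, i.e. ‖Σ_i a_i e_{σ(i)}‖ = ‖Σ_i a_i e_i‖ for every injection σ : ℕ → ℕ and every finitely supported scalar sequence {a_i}. Then for all n, k ∈ ℕ and all scalars a_1,…,a_k one has ‖Σ_{i=1}^k a_i (Σ_{j=1}^n e_{(i−1)n+j})‖ ≤ C n^{1/p} ‖Σ_{i=1}^k a_i e_i‖. -/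
/-!
Place a copy of `x = ∑ i < k, a i • e i` on each of the consecutive blocks of length `k` of `e`.
By 1-symmetry every copy has norm `‖x‖`, and copies on disjoint blocks of a disjoint sequence
are disjoint, so the normalized copies form a normalized disjoint sequence. A subsequence of it
has an upper `p`-estimate with constant `C`, so the sum of `n` of its copies has norm at most
`C n^{1/p} ‖x‖`. That sum and `D_n x` are combinations of `n k` distinct vectors of `e` with the
same coefficients (each `a i` taken `n` times), so by 1-symmetry they have the same norm.
-/

open Filter Finset

/-- A sequence is normalized if every term has norm one. -/
def IsNormalizedSeq {X : Type*} [NormedAddCommGroup X] (x : ℕ → X) : Prop :=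
  ∀ n, ‖x n‖ = 1

/-- A sequence in a Banach lattice is pairwise disjoint if `|x i| ⊓ |x j| = 0` for `i ≠ j`. -/
def IsDisjointSeq {X : Type*} [NormedAddCommGroup X] [Lattice X] [HasSolidNorm X]
    [IsOrderedAddMonoid X] (x : ℕ → X) : Prop :=
  ∀ i j, i ≠ j → |x i| ⊓ |x j| = 0

/-- A sequence is weakly null if `f (x n) → 0` for every continuous linear functional `f`. -/
def IsWeaklyNull {X : Type*} [NormedAddCommGroup X] [NormedSpace ℝ X] (x : ℕ → X) : Prop :=
  ∀ f : X →L[ℝ] ℝ, Tendsto (fun n => f (x n)) atTop (nhds 0)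

/-- A sequence has an upper `p`-estimate with constant `C`. -/
def HasUpperEstimate {X : Type*} [NormedAddCommGroup X] [NormedSpace ℝ X]
    (p C : ℝ) (x : ℕ → X) : Prop :=
  ∀ (n : ℕ) (a : ℕ → ℝ),
    ‖∑ k ∈ Finset.range n, a k • x k‖ ≤ C * (∑ k ∈ Finset.range n, |a k| ^ p) ^ (1 / p)

/-- A sequence has a lower `q`-estimate with constant `C`. -/
def HasLowerEstimate {X : Type*} [NormedAddCommGroup X] [NormedSpace ℝ X]
    (q C : ℝ) (x : ℕ → X) : Prop :=
  ∀ (n : ℕ) (a : ℕ → ℝ),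
    C * (∑ k ∈ Finset.range n, |a k| ^ q) ^ (1 / q) ≤ ‖∑ k ∈ Finset.range n, a k • x k‖

/-- A sequence is equivalent to the unit vector basis of `ℓ_r`. -/
def EquivUnitBasisLp {X : Type*} [NormedAddCommGroup X] [NormedSpace ℝ X]
    (r : ℝ) (x : ℕ → X) : Prop :=
  ∃ c C : ℝ, 0 < c ∧ 0 < C ∧ HasLowerEstimate r c x ∧ HasUpperEstimate r C x

/-- `smoothOrder p` is the greatest integer strictly less than `p` (for `p > 1`). -/
noncomputable def smoothOrder (p : ℝ) : ℕ := ⌈p⌉₊ - 1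

/-- `φ : X → ℝ` is `UH^p`-smooth: it is `N`-times Fréchet differentiable, where `N` is the
greatest integer strictly below `p`, and its `N`-th derivative is `(p-N)`-Hölder. -/
def IsUHSmoothFun {X : Type*} [NormedAddCommGroup X] [NormedSpace ℝ X]
    (p : ℝ) (φ : X → ℝ) : Prop :=
  ContDiff ℝ (smoothOrder p) φ ∧
  ∃ M : ℝ, 0 < M ∧ ∀ x y : X,
    ‖iteratedFDeriv ℝ (smoothOrder p) φ x - iteratedFDeriv ℝ (smoothOrder p) φ y‖
      ≤ M * ‖x - y‖ ^ (p - (smoothOrder p : ℝ))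

/-- A Banach space is `UH^p`-smooth if it carries a `UH^p`-smooth bump function. -/
def IsUHSmooth (p : ℝ) (X : Type*) [NormedAddCommGroup X] [NormedSpace ℝ X] : Prop :=
  ∃ φ : X → ℝ, IsUHSmoothFun p φ ∧
    Bornology.IsBounded (Function.support φ) ∧ (Function.support φ).Nonempty

/-- `X` has the `UDS_p`-property: there is a uniform constant `C` such that every normalized
pairwise disjoint sequence has a subsequence with an upper `p`-estimate with constant `C`. -/
def HasUDS (X : Type*) [NormedAddCommGroup X] [Lattice X] [HasSolidNorm X]
    [IsOrderedAddMonoid X] [NormedSpace ℝ X] (p : ℝ) : Prop :=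
  ∃ C : ℝ, 0 < C ∧ ∀ x : ℕ → X, IsNormalizedSeq x → IsDisjointSeq x →
    ∃ φ : ℕ → ℕ, StrictMono φ ∧ HasUpperEstimate p C (x ∘ φ)

theorem Nat.injOn_mul_add (n : ℕ) : Set.InjOn (fun p : ℕ × ℕ => p.1 * n + p.2) {p | p.2 < n} := by
  rintro ⟨i, j⟩ (hj : j < n) ⟨i', j'⟩ (hj' : j' < n) (h : i * n + j = i' * n + j')
  have hn : 0 < n := by omega
  have hmod := congrArg (· % n) h
  have hdiv := congrArg (· / n) h
  simp only [Nat.mul_add_mod_of_lt hj, Nat.mul_add_mod_of_lt hj'] at hmod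
  simp only [mul_comm _ n, Nat.mul_add_div hn, Nat.div_eq_of_lt hj, Nat.div_eq_of_lt hj'] at hdiv
  simp_all

section LatticeOrderedGroup

variable {X : Type*} [AddCommGroup X] [Lattice X] [IsOrderedAddMonoid X]

theorem add_inf_eq_zero {u v w : X} (huw : u ⊓ w = 0) (hvw : v ⊓ w = 0) : (u + v) ⊓ w = 0 := by
  have hu : 0 ≤ u := huw ▸ inf_le_left
  have hv : 0 ≤ v := hvw ▸ inf_le_left
  have hw : 0 ≤ w := huw ▸ inf_le_right
  refine le_antisymm ?_ (le_inf (add_nonneg hu hv) hw)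
  calc (u + v) ⊓ w ≤ (u + v) ⊓ (w + v) ⊓ w :=
        le_inf (inf_le_inf_left _ (le_add_of_nonneg_right hv)) inf_le_right
    _ = v ⊓ w := by rw [← inf_add, huw, zero_add]
    _ = 0 := hvw

theorem Finset.sum_inf_eq_zero {ι : Type*} (s : Finset ι) {f : ι → X} {w : X} (hw : 0 ≤ w)
    (h : ∀ i ∈ s, f i ⊓ w = 0) : (∑ i ∈ s, f i) ⊓ w = 0 :=
  Finset.sum_induction f (· ⊓ w = 0) (fun _ _ => add_inf_eq_zero) (inf_eq_left.2 hw) h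

end LatticeOrderedGroup

section VectorLattice

variable {X : Type*} [AddCommGroup X] [Lattice X] [Module ℝ X] [PosSMulMono ℝ X]

theorem abs_smul_le_abs_smul_abs (c : ℝ) (x : X) : |c • x| ≤ |c| • |x| := by
  rcases le_total 0 c with hc | hc
  · rw [abs_of_nonneg hc, abs_le', ← smul_neg]
    exact ⟨smul_le_smul_of_nonneg_left (le_abs_self x) hc,
      smul_le_smul_of_nonneg_left (neg_le_abs x) hc⟩
  · rw [abs_of_nonpos hc, abs_le', ← neg_smul, ← neg_smul_neg c x]
    exact ⟨smul_le_smul_of_nonneg_left (neg_le_abs x) (neg_nonneg.2 hc),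
      smul_le_smul_of_nonneg_left (le_abs_self x) (neg_nonneg.2 hc)⟩

variable [IsOrderedAddMonoid X]

theorem abs_sum_smul_le {ι : Type*} (s : Finset ι) (a : ι → ℝ) (x : ι → X) :
    |∑ i ∈ s, a i • x i| ≤ ∑ i ∈ s, |a i| • |x i| :=
  (Finset.le_sum_of_subadditive _ abs_zero.le abs_add_le s _).trans
    (Finset.sum_le_sum fun i _ => abs_smul_le_abs_smul_abs (a i) (x i))

theorem smul_inf_smul_eq_zero {u v : X} (huv : u ⊓ v = 0) {c d : ℝ} (hc : 0 ≤ c) (hd : 0 ≤ d) :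
    (c • u) ⊓ (d • v) = 0 := by
  have hu : 0 ≤ u := huv ▸ inf_le_left
  have hv : 0 ≤ v := huv ▸ inf_le_right
  have hM : 0 < c + d + 1 := by positivity
  refine le_antisymm ?_ (le_inf (smul_nonneg hc hu) (smul_nonneg hd hv))
  calc (c • u) ⊓ (d • v) ≤ ((c + d + 1) • u) ⊓ ((c + d + 1) • v) :=
        inf_le_inf (smul_le_smul_of_nonneg_right (by linarith) hu)
          (smul_le_smul_of_nonneg_right (by linarith) hv)
    _ = (c + d + 1) • (u ⊓ v) := ((OrderIso.smulRight hM).map_inf u v).symm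
    _ = 0 := by rw [huv, smul_zero]

end VectorLattice

def blockCopy {X : Type*} [AddCommGroup X] [Module ℝ X] (e : ℕ → X) (a : ℕ → ℝ) (k m : ℕ) : X :=
  ∑ i ∈ range k, a i • e (m * k + i)

section DisjointSeq

variable {X : Type*} [NormedAddCommGroup X] [Lattice X] [HasSolidNorm X] [IsOrderedAddMonoid X]
  [NormedSpace ℝ X] [PosSMulMono ℝ X] {e : ℕ → X}

theorem IsDisjointSeq.abs_sum_inf_abs_sum_eq_zero (he : IsDisjointSeq e) {ι κ : Type*}
    (s : Finset ι) (t : Finset κ) (f : ι → ℕ) (g : κ → ℕ) (a : ι → ℝ) (b : κ → ℝ)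
    (hfg : ∀ i ∈ s, ∀ j ∈ t, f i ≠ g j) :
    |∑ i ∈ s, a i • e (f i)| ⊓ |∑ j ∈ t, b j • e (g j)| = 0 := by
  have hsupp : (∑ i ∈ s, |a i| • |e (f i)|) ⊓ (∑ j ∈ t, |b j| • |e (g j)|) = 0 := by
    refine s.sum_inf_eq_zero (sum_nonneg fun j _ => smul_nonneg (abs_nonneg _) (abs_nonneg _))
      fun i hi => ?_
    rw [inf_comm]
    refine t.sum_inf_eq_zero (smul_nonneg (abs_nonneg _) (abs_nonneg _)) fun j hj => ?_
    exact smul_inf_smul_eq_zero (he _ _ (hfg i hi j hj).symm) (abs_nonneg _) (abs_nonneg _)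
  refine le_antisymm ?_ (le_inf (abs_nonneg _) (abs_nonneg _))
  exact hsupp ▸ inf_le_inf (abs_sum_smul_le _ _ _) (abs_sum_smul_le _ _ _)

theorem IsDisjointSeq.const_smul (he : IsDisjointSeq e) (c : ℝ) :
    IsDisjointSeq fun m => c • e m := by
  intro i j hij
  refine le_antisymm ?_ (le_inf (abs_nonneg _) (abs_nonneg _))
  exact (inf_le_inf (abs_smul_le_abs_smul_abs c _) (abs_smul_le_abs_smul_abs c _)).trans
    (smul_inf_smul_eq_zero (he i j hij) (abs_nonneg c) (abs_nonneg c)).le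

theorem IsDisjointSeq.blockCopy (he : IsDisjointSeq e) (a : ℕ → ℝ) (k : ℕ) :
    IsDisjointSeq (blockCopy e a k) := by
  intro m m' hm
  refine he.abs_sum_inf_abs_sum_eq_zero _ _ _ _ a a fun i hi j hj hij => hm ?_
  have := @Nat.injOn_mul_add k (m, i) (mem_range.1 hi) (m', j) (mem_range.1 hj) hij
  exact (Prod.ext_iff.1 this).1

end DisjointSeq

def IsSymmetricSeq {X : Type*} [NormedAddCommGroup X] [NormedSpace ℝ X] (e : ℕ → X) : Prop :=
  ∀ σ : ℕ → ℕ, Function.Injective σ → ∀ (k : ℕ) (a : ℕ → ℝ),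
    ‖∑ i ∈ range k, a i • e (σ i)‖ = ‖∑ i ∈ range k, a i • e i‖

namespace IsSymmetricSeq

variable {X : Type*} [NormedAddCommGroup X] [NormedSpace ℝ X] {e : ℕ → X}

theorem norm_sum_comp_of_injOn (he : IsSymmetricSeq e) (s : Finset ℕ) {σ : ℕ → ℕ}
    (hσ : Set.InjOn σ s) (c : ℕ → ℝ) : ‖∑ l ∈ s, c l • e (σ l)‖ = ‖∑ l ∈ s, c l • e l‖ := by
  classical
  obtain ⟨N, hN⟩ := s.exists_nat_subset_range
  obtain ⟨M, hM⟩ := (s.image σ).exists_nat_subset_range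
  -- outside `s`, send `l` past the values `σ` takes on `s`, to obtain an injection of `ℕ`
  set τ : ℕ → ℕ := fun l => if l ∈ s then σ l else M + l
  have hτ : Function.Injective τ := by
    intro l l' h
    have hlt : ∀ l ∈ s, σ l < M := fun l hl => mem_range.1 (hM (mem_image_of_mem σ hl))
    by_cases hl : l ∈ s <;> by_cases hl' : l' ∈ s <;>
      simp only [τ, hl, hl', if_true, if_false] at h
    · exact hσ hl hl' h
    · have := hlt l hl; omega
    · have := hlt l' hl'; omega
    · omega
  have hsum : ∀ x : ℕ → X,
      ∑ l ∈ s, c l • x l = ∑ l ∈ range N, (if l ∈ s then c l else 0) • x l := fun x => by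
    simp only [ite_smul, zero_smul, sum_ite_mem, inter_eq_right.2 hN]
  calc ‖∑ l ∈ s, c l • e (σ l)‖ = ‖∑ l ∈ s, c l • e (τ l)‖ := by
        congr 1
        exact sum_congr rfl fun l hl => by simp only [τ, hl, if_true]
    _ = ‖∑ l ∈ range N, (if l ∈ s then c l else 0) • e (τ l)‖ := by rw [hsum]
    _ = ‖∑ l ∈ range N, (if l ∈ s then c l else 0) • e l‖ := he τ hτ N _
    _ = ‖∑ l ∈ s, c l • e l‖ := by rw [hsum]

theorem norm_sum_comp_eq (he : IsSymmetricSeq e) {ι : Type*} [Denumerable ι] (s : Finset ι)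
    {σ τ : ι → ℕ} (hσ : Set.InjOn σ s) (hτ : Set.InjOn τ s) (c : ι → ℝ) :
    ‖∑ p ∈ s, c p • e (σ p)‖ = ‖∑ p ∈ s, c p • e (τ p)‖ := by
  set E := Denumerable.eqv ι
  have hcanonical : ∀ ρ : ι → ℕ, Set.InjOn ρ s →
      ‖∑ p ∈ s, c p • e (ρ p)‖ = ‖∑ l ∈ s.map E.toEmbedding, c (E.symm l) • e l‖ := by
    intro ρ hρ
    rw [← he.norm_sum_comp_of_injOn _ (σ := fun l => ρ (E.symm l)), sum_map]
    · simp only [Equiv.coe_toEmbedding, Equiv.symm_apply_apply]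
    · intro l hl l' hl' h
      obtain ⟨p, hp, rfl⟩ := mem_map.1 hl
      obtain ⟨p', hp', rfl⟩ := mem_map.1 hl'
      simp only [Equiv.coe_toEmbedding, Equiv.symm_apply_apply] at h
      rw [hρ hp hp' h]
  rw [hcanonical σ hσ, hcanonical τ hτ]

theorem norm_blockCopy (he : IsSymmetricSeq e) (a : ℕ → ℝ) (k m : ℕ) :
    ‖blockCopy e a k m‖ = ‖∑ i ∈ range k, a i • e i‖ :=
  he _ (add_right_injective _) k a

theorem norm_dilation_eq (he : IsSymmetricSeq e) (a : ℕ → ℝ) (n k : ℕ) {τ : ℕ → ℕ}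
    (hτ : Function.Injective τ) :
    ‖∑ i ∈ range k, a i • ∑ j ∈ range n, e (i * n + j)‖ =
      ‖∑ j ∈ range n, blockCopy e a k (τ j)‖ := by
  have hdilation : ∑ i ∈ range k, a i • ∑ j ∈ range n, e (i * n + j) =
      ∑ p ∈ range k ×ˢ range n, a p.1 • e (p.1 * n + p.2) := by
    simp only [sum_product, smul_sum]
  have hblocks : ∑ j ∈ range n, blockCopy e a k (τ j) =
      ∑ p ∈ range k ×ˢ range n, a p.1 • e (τ p.2 * k + p.1) := by
    rw [sum_product_right]
    rfl
  rw [hdilation, hblocks]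
  refine he.norm_sum_comp_eq _ ?_ ?_ _
  · exact (Nat.injOn_mul_add n).mono fun p hp => mem_range.1 (mem_product.1 hp).2
  · intro p hp q hq h
    have hpq := @Nat.injOn_mul_add k (τ p.2, p.1) (mem_range.1 (mem_product.1 hp).1)
      (τ q.2, q.1) (mem_range.1 (mem_product.1 hq).1) h
    simp only [Prod.mk.injEq] at hpq
    exact Prod.ext hpq.2 (hτ hpq.1)

end IsSymmetricSeq

theorem statement4_general {X : Type*} [NormedAddCommGroup X] [Lattice X] [HasSolidNorm X]
    [IsOrderedAddMonoid X] [NormedSpace ℝ X]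
    [PosSMulStrictMono ℝ X] (p C : ℝ)
    (hUDS : ∀ x : ℕ → X, IsNormalizedSeq x → IsDisjointSeq x →
      ∃ φ : ℕ → ℕ, StrictMono φ ∧ HasUpperEstimate p C (x ∘ φ))
    (e : ℕ → X) (hdisj : IsDisjointSeq e)
    (hsymm : ∀ σ : ℕ → ℕ, Function.Injective σ → ∀ (k : ℕ) (a : ℕ → ℝ),
      ‖∑ i ∈ Finset.range k, a i • e (σ i)‖ = ‖∑ i ∈ Finset.range k, a i • e i‖)
    (n k : ℕ) (a : ℕ → ℝ) :
    ‖∑ i ∈ Finset.range k, a i • (∑ j ∈ Finset.range n, e (i * n + j))‖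
      ≤ C * (n : ℝ) ^ (1 / p) * ‖∑ i ∈ Finset.range k, a i • e i‖ := by
  have he : IsSymmetricSeq e := hsymm
  set x := ∑ i ∈ range k, a i • e i
  have hblock : ∀ m, ‖blockCopy e a k m‖ = ‖x‖ := he.norm_blockCopy a k
  rcases (norm_nonneg x).eq_or_lt with hx | hx
  · rw [he.norm_dilation_eq a n k Function.injective_id, ← hx, mul_zero]
    exact (norm_sum_le _ _).trans (by simp [hblock, ← hx])
  set z : ℕ → X := fun m => ‖x‖⁻¹ • blockCopy e a k m
  have hz : IsNormalizedSeq z := fun m => by simp [z, norm_smul, hblock, hx.ne']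
  obtain ⟨φ, hφ, hest⟩ := hUDS z hz ((hdisj.blockCopy a k).const_smul _)
  have hφn : ‖∑ j ∈ range n, z (φ j)‖ ≤ C * (n : ℝ) ^ (1 / p) := by simpa using hest n 1
  rw [he.norm_dilation_eq a n k hφ.injective]
  calc ‖∑ j ∈ range n, blockCopy e a k (φ j)‖ = ‖x‖ * ‖∑ j ∈ range n, z (φ j)‖ := by
        simp only [z, ← smul_sum, norm_smul, norm_inv, norm_norm, mul_inv_cancel_left₀ hx.ne']
    _ ≤ ‖x‖ * (C * (n : ℝ) ^ (1 / p)) := by gcongr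
    _ = C * (n : ℝ) ^ (1 / p) * ‖x‖ := mul_comm _ _

/-- Proposition 1(1), intermediate claim: if every normalized pairwise disjoint sequence in the
Banach lattice `X` has a subsequence with an upper `p`-estimate with uniform constant `C`, and
`e` is a normalized pairwise disjoint `1`-symmetric sequence, then the dilation operator `D_n`
(sending `e i` to the block `∑_{j<n} e (i*n+j)`) satisfies `‖D_n x‖ ≤ C n^{1/p} ‖x‖`. -/
theorem statement4 {X : Type*} [NormedAddCommGroup X] [Lattice X] [HasSolidNorm X]
    [IsOrderedAddMonoid X] [NormedSpace ℝ X]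
    [PosSMulStrictMono ℝ X] [CompleteSpace X] (p C : ℝ) (hp : 1 < p) (hC : 0 < C)
    (hUDS : ∀ x : ℕ → X, IsNormalizedSeq x → IsDisjointSeq x →
      ∃ φ : ℕ → ℕ, StrictMono φ ∧ HasUpperEstimate p C (x ∘ φ))
    (e : ℕ → X) (hnorm : IsNormalizedSeq e) (hdisj : IsDisjointSeq e)
    (hsymm : ∀ σ : ℕ → ℕ, Function.Injective σ → ∀ (k : ℕ) (a : ℕ → ℝ),
      ‖∑ i ∈ Finset.range k, a i • e (σ i)‖ = ‖∑ i ∈ Finset.range k, a i • e i‖)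
    (n k : ℕ) (a : ℕ → ℝ) :
    ‖∑ i ∈ Finset.range k, a i • (∑ j ∈ Finset.range n, e (i * n + j))‖
      ≤ C * (n : ℝ) ^ (1 / p) * ‖∑ i ∈ Finset.range k, a i • e i‖ :=
  statement4_general p C hUDS e hdisj hsymm n k a
end

section
/- Let X be a Banach lattice, 1 < q < ∞, and C > 0, and suppose that every normalized pairwise disjoint sequence in X has a subsequence with a lower q-estimate with constant C. Let {e_i}_{i≥1} be a normalized pairwise disjoint sequence in X which is 1-symmetric, i.e. ‖Σ_i a_i e_{σ(i)}‖ = ‖Σ_i a_i e_i‖ for every injection σ : ℕ → ℕ and every finitely supported scalar sequence {a_i}. Then for all n, k ∈ ℕ and all scalars a_1,…,a_k one has ‖Σ_{i=1}^k a_i (Σ_{j=1}^n e_{(i−1)n+j})‖ ≥ C n^{1/q} ‖Σ_{i=1}^k a_i e_i‖. -/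
open Filter Finset

/-!
Let `x = ∑_{i<k} a i • e i`. Its translates `g m = ∑_{i<k} a i • e (i + m k)` live on the
pairwise disjoint index blocks `[m k, (m + 1) k)`, so they are pairwise disjoint, and by
1-symmetry each has norm `‖x‖`. Hence `g m / ‖x‖` is a normalized disjoint sequence, and the lower
`q`-estimate of a subsequence `g ∘ φ` with all coefficients one gives
`C n^{1/q} ‖x‖ ≤ ‖∑_{j<n} g (φ j)‖`. The vector `∑_{j<n} g (φ j)` carries the coefficient `a i` on
the `n k` distinct indices `i + φ j k`, exactly as `D_n x` carries it on the indices `i n + j`;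
1-symmetry makes the two norms equal.
-/

section DisjointComplement

variable {𝕜 X : Type*} [Field 𝕜] [LinearOrder 𝕜] [IsStrictOrderedRing 𝕜]
  [Lattice X] [AddCommGroup X] [Module 𝕜 X] [PosSMulStrictMono 𝕜 X]

lemma smul_inf_of_pos {r : 𝕜} (hr : 0 < r) (x y : X) : r • (x ⊓ y) = r • x ⊓ r • y :=
  map_inf (OrderIso.smulRight hr) x y

lemma smul_sup_of_pos {r : 𝕜} (hr : 0 < r) (x y : X) : r • (x ⊔ y) = r • x ⊔ r • y :=
  map_sup (OrderIso.smulRight hr) x y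

lemma abs_smul_of_pos {r : 𝕜} (hr : 0 < r) (x : X) : |r • x| = r • |x| := by
  rw [abs, abs, smul_sup_of_pos hr, smul_neg]

variable [IsOrderedAddMonoid X]

lemma abs_smul' (r : 𝕜) (x : X) : |r • x| = |r| • |x| := by
  rcases lt_trichotomy r 0 with hr | rfl | hr
  · rw [← neg_smul_neg, abs_smul_of_pos (neg_pos.2 hr), abs_neg, abs_of_neg hr]
  · simp
  · rw [abs_smul_of_pos hr, abs_of_pos hr]

lemma add_inf_le_inf_add_inf {a b c : X} (ha : 0 ≤ a) (hb : 0 ≤ b) (hc : 0 ≤ c) :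
    (a + b) ⊓ c ≤ a ⊓ c + b ⊓ c := by
  rw [add_inf, inf_add, inf_add]
  exact le_inf (le_inf inf_le_left (inf_le_right.trans (le_add_of_nonneg_right hb)))
    (le_inf (inf_le_right.trans (le_add_of_nonneg_left ha))
      (inf_le_right.trans (le_add_of_nonneg_left hc)))

variable (𝕜) in
def disjointComplement (a : X) : Submodule 𝕜 X where
  carrier := {x | |x| ⊓ |a| = 0}
  zero_mem' := by simp
  add_mem' {x y} hx hy := le_antisymm
    (((inf_le_inf_right _ (abs_add_le x y)).trans
      (add_inf_le_inf_add_inf (abs_nonneg x) (abs_nonneg y) (abs_nonneg a))).trans_eq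
        (by simp_all))
    (le_inf (abs_nonneg _) (abs_nonneg _))
  smul_mem' r x hx := by
    have hM : 0 < max |r| 1 := lt_max_of_lt_right one_pos
    refine le_antisymm ?_ (le_inf (abs_nonneg _) (abs_nonneg _))
    calc |r • x| ⊓ |a| ≤ max |r| 1 • |x| ⊓ max |r| 1 • |a| := by
          rw [abs_smul']
          exact inf_le_inf (smul_le_smul_of_nonneg_right (le_max_left _ _) (abs_nonneg x))
            (le_smul_of_one_le_left (abs_nonneg a) (le_max_right _ _))
      _ = 0 := by rw [← smul_inf_of_pos hM, show |x| ⊓ |a| = 0 from hx, smul_zero]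

lemma mem_disjointComplement {a x : X} : x ∈ disjointComplement 𝕜 a ↔ |x| ⊓ |a| = 0 :=
  Iff.rfl

lemma mem_disjointComplement_comm {a x : X} :
    x ∈ disjointComplement 𝕜 a ↔ a ∈ disjointComplement 𝕜 x := by
  simp only [mem_disjointComplement, inf_comm]

end DisjointComplement

lemma Nat.eq_and_eq_of_add_mul_eq_add_mul {k i j m m' : ℕ} (hi : i < k) (hj : j < k)
    (h : i + m * k = j + m' * k) : i = j ∧ m = m' := by
  have hk : 0 < k := by omega
  have hmod := congrArg (· % k) h
  have hdiv := congrArg (· / k) h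
  simp only [Nat.add_mul_mod_self_right, Nat.mod_eq_of_lt hi, Nat.mod_eq_of_lt hj] at hmod
  simp only [Nat.add_mul_div_right _ _ hk, Nat.div_eq_of_lt hi, Nat.div_eq_of_lt hj,
    zero_add] at hdiv
  exact ⟨hmod, hdiv⟩

lemma exists_perm_apply_eq_of_injOn {ι α : Type*} [Infinite α] {s : Set ι} (hs : s.Finite)
    {u v : ι → α} (hu : Set.InjOn u s) (hv : Set.InjOn v s) :
    ∃ π : Equiv.Perm α, ∀ t ∈ s, π (u t) = v t := by
  let f : u '' s ↪ α := ((hu.bijOn_image.equiv u).symm.trans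
    (hv.bijOn_image.equiv v)).toEmbedding.trans (Function.Embedding.subtype _)
  obtain ⟨π, hπ⟩ := Cardinal.extend_function_of_lt f
    ((hs.image u).lt_aleph0.trans_le (Cardinal.aleph0_le_mk α)) ⟨Equiv.refl α⟩
  refine ⟨π, fun t ht => ?_⟩
  have hut : (hu.bijOn_image.equiv u).symm ⟨u t, Set.mem_image_of_mem u ht⟩ = ⟨t, ht⟩ :=
    (Equiv.symm_apply_eq _).2 rfl
  rw [hπ ⟨u t, Set.mem_image_of_mem u ht⟩]
  show v ((hu.bijOn_image.equiv u).symm ⟨u t, _⟩ : ι) = v t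
  rw [hut]

lemma sum_smul_comp_eq_sum_fiberwise {ι κ R M : Type*} [Semiring R] [AddCommMonoid M]
    [Module R M] [DecidableEq κ] {s : Finset ι} {T : Finset κ} {u : ι → κ}
    (hu : ∀ t ∈ s, u t ∈ T) (c : ι → R) (g : κ → M) :
    ∑ t ∈ s, c t • g (u t) = ∑ i ∈ T, (∑ t ∈ s with u t = i, c t) • g i := by
  simp_rw [Finset.sum_smul]
  rw [← Finset.sum_fiberwise_of_maps_to hu]
  refine Finset.sum_congr rfl fun i _ => Finset.sum_congr rfl fun t ht => ?_
  rw [(Finset.mem_filter.1 ht).2]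

section Symmetric

variable {X : Type*} [SeminormedAddCommGroup X] [Module ℝ X]

def IsOneSymmetric (e : ℕ → X) : Prop :=
  ∀ σ : ℕ → ℕ, Function.Injective σ → ∀ (k : ℕ) (a : ℕ → ℝ),
    ‖∑ i ∈ range k, a i • e (σ i)‖ = ‖∑ i ∈ range k, a i • e i‖

def blockTranslate (e : ℕ → X) (a : ℕ → ℝ) (k m : ℕ) : X :=
  ∑ i ∈ range k, a i • e (i + m * k)

namespace IsOneSymmetric

variable {e : ℕ → X} (he : IsOneSymmetric e)
include he

lemma norm_sum_comp {ι : Type*} {σ : ℕ → ℕ} (hσ : Function.Injective σ) (s : Finset ι)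
    (c : ι → ℝ) (u : ι → ℕ) :
    ‖∑ t ∈ s, c t • e (σ (u t))‖ = ‖∑ t ∈ s, c t • e (u t)‖ := by
  have hu : ∀ t ∈ s, u t ∈ range (s.sup u + 1) := fun t ht =>
    mem_range.2 (Nat.lt_succ_of_le (le_sup ht))
  rw [sum_smul_comp_eq_sum_fiberwise hu c fun i => e (σ i), sum_smul_comp_eq_sum_fiberwise hu c e]
  exact he σ hσ _ _

lemma norm_sum_eq_of_injOn {ι : Type*} {s : Finset ι} {u v : ι → ℕ} (hu : Set.InjOn u s)
    (hv : Set.InjOn v s) (c : ι → ℝ) :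
    ‖∑ t ∈ s, c t • e (u t)‖ = ‖∑ t ∈ s, c t • e (v t)‖ := by
  obtain ⟨π, hπ⟩ := exists_perm_apply_eq_of_injOn s.finite_toSet hu hv
  rw [← he.norm_sum_comp π.injective s c u]
  exact congrArg norm (sum_congr rfl fun t ht => by rw [hπ t ht])

lemma norm_blockTranslate (a : ℕ → ℝ) (k m : ℕ) :
    ‖blockTranslate e a k m‖ = ‖∑ i ∈ range k, a i • e i‖ :=
  he _ (add_left_injective _) k a

lemma norm_sum_blockTranslate (a : ℕ → ℝ) (k : ℕ) {φ : ℕ → ℕ} (hφ : Function.Injective φ)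
    (n : ℕ) :
    ‖∑ j ∈ range n, blockTranslate e a k (φ j)‖
      = ‖∑ i ∈ range k, a i • ∑ j ∈ range n, e (i * n + j)‖ := by
  have hu : Set.InjOn (fun p : ℕ × ℕ => p.1 + φ p.2 * k) ↑(range k ×ˢ range n) :=
    fun p hp p' hp' h => by
      simp only [coe_product, coe_range, Set.mem_prod, Set.mem_Iio] at hp hp'
      obtain ⟨h1, h2⟩ := Nat.eq_and_eq_of_add_mul_eq_add_mul hp.1 hp'.1 h
      exact Prod.ext h1 (hφ h2)
  have hv : Set.InjOn (fun p : ℕ × ℕ => p.1 * n + p.2) ↑(range k ×ˢ range n) :=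
    fun p hp p' hp' h => by
      simp only [coe_product, coe_range, Set.mem_prod, Set.mem_Iio] at hp hp'
      obtain ⟨h1, h2⟩ := Nat.eq_and_eq_of_add_mul_eq_add_mul hp.2 hp'.2
        (by simpa only [add_comm] using h)
      exact Prod.ext h2 h1
  have := he.norm_sum_eq_of_injOn hu hv fun p => a p.1
  rw [sum_product_right, sum_product] at this
  simpa only [blockTranslate, smul_sum] using this

end IsOneSymmetric

end Symmetric

section Disjoint

variable {X : Type*} [NormedAddCommGroup X] [Lattice X] [HasSolidNorm X] [IsOrderedAddMonoid X]
  [NormedSpace ℝ X] [PosSMulStrictMono ℝ X]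

lemma IsDisjointSeq.smul {x : ℕ → X} (hx : IsDisjointSeq x) (c : ℕ → ℝ) :
    IsDisjointSeq fun m => c m • x m := fun i j hij => by
  have hi : c i • x i ∈ disjointComplement ℝ (x j) := Submodule.smul_mem _ _ (hx i j hij)
  rw [mem_disjointComplement_comm] at hi
  exact mem_disjointComplement_comm.1 (Submodule.smul_mem _ (c j) hi)

lemma IsDisjointSeq.blockTranslate {e : ℕ → X} (he : IsDisjointSeq e) (a : ℕ → ℝ) (k : ℕ) :
    IsDisjointSeq (blockTranslate e a k) := fun m m' hm => by
  show _ ∈ disjointComplement ℝ _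
  refine Submodule.sum_mem _ fun i hi => Submodule.smul_mem _ _ ?_
  rw [mem_disjointComplement_comm]
  refine Submodule.sum_mem _ fun j hj => Submodule.smul_mem _ _ ?_
  exact he _ _ fun h =>
    hm (Nat.eq_and_eq_of_add_mul_eq_add_mul (mem_range.1 hj) (mem_range.1 hi) h).2.symm

end Disjoint

theorem statement5_general {X : Type*} [NormedAddCommGroup X] [Lattice X] [HasSolidNorm X]
    [IsOrderedAddMonoid X] [NormedSpace ℝ X]
    [PosSMulStrictMono ℝ X] (q C : ℝ)
    (hUDT : ∀ x : ℕ → X, IsNormalizedSeq x → IsDisjointSeq x →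
      ∃ φ : ℕ → ℕ, StrictMono φ ∧ HasLowerEstimate q C (x ∘ φ))
    (e : ℕ → X) (hdisj : IsDisjointSeq e)
    (hsymm : ∀ σ : ℕ → ℕ, Function.Injective σ → ∀ (k : ℕ) (a : ℕ → ℝ),
      ‖∑ i ∈ Finset.range k, a i • e (σ i)‖ = ‖∑ i ∈ Finset.range k, a i • e i‖)
    (n k : ℕ) (a : ℕ → ℝ) :
    C * (n : ℝ) ^ (1 / q) * ‖∑ i ∈ Finset.range k, a i • e i‖
      ≤ ‖∑ i ∈ Finset.range k, a i • (∑ j ∈ Finset.range n, e (i * n + j))‖ := by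
  set x := ∑ i ∈ range k, a i • e i
  rcases (norm_nonneg x).eq_or_lt with hx | hx
  · rw [← hx, mul_zero]
    exact norm_nonneg _
  obtain ⟨φ, hφ, hlow⟩ := hUDT (fun m => ‖x‖⁻¹ • blockTranslate e a k m)
    (fun m => by rw [norm_smul, norm_inv, norm_norm, IsOneSymmetric.norm_blockTranslate hsymm,
      inv_mul_cancel₀ hx.ne'])
    ((hdisj.blockTranslate a k).smul _)
  have hest : C * (n : ℝ) ^ (1 / q) ≤ ‖x‖⁻¹ * ‖∑ j ∈ range n, blockTranslate e a k (φ j)‖ := by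
    simpa [← Finset.smul_sum, norm_smul, one_div] using hlow n fun _ => 1
  rw [IsOneSymmetric.norm_sum_blockTranslate hsymm a k hφ.injective] at hest
  simpa only [mul_comm ‖x‖] using (le_inv_mul_iff₀ hx).1 hest

/-- Proposition 1(2), intermediate claim: if every normalized pairwise disjoint sequence in the
Banach lattice `X` has a subsequence with a lower `q`-estimate with uniform constant `C`, and
`e` is a normalized pairwise disjoint `1`-symmetric sequence, then the dilation operator `D_n`
(sending `e i` to the block `∑_{j<n} e (i*n+j)`) satisfies `‖D_n x‖ ≥ C n^{1/q} ‖x‖`. -/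
theorem statement5 {X : Type*} [NormedAddCommGroup X] [Lattice X] [HasSolidNorm X]
    [IsOrderedAddMonoid X] [NormedSpace ℝ X]
    [PosSMulStrictMono ℝ X] [CompleteSpace X] (q C : ℝ) (hq : 1 < q) (hC : 0 < C)
    (hUDT : ∀ x : ℕ → X, IsNormalizedSeq x → IsDisjointSeq x →
      ∃ φ : ℕ → ℕ, StrictMono φ ∧ HasLowerEstimate q C (x ∘ φ))
    (e : ℕ → X) (hnorm : IsNormalizedSeq e) (hdisj : IsDisjointSeq e)
    (hsymm : ∀ σ : ℕ → ℕ, Function.Injective σ → ∀ (k : ℕ) (a : ℕ → ℝ),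
      ‖∑ i ∈ Finset.range k, a i • e (σ i)‖ = ‖∑ i ∈ Finset.range k, a i • e i‖)
    (n k : ℕ) (a : ℕ → ℝ) :
    C * (n : ℝ) ^ (1 / q) * ‖∑ i ∈ Finset.range k, a i • e i‖
      ≤ ‖∑ i ∈ Finset.range k, a i • (∑ j ∈ Finset.range n, e (i * n + j))‖ :=
  statement5_general q C hUDT e hdisj hsymm n k a
end

section
/- Let 1 < p, q < ∞ and 1 < r < ∞, and consider Lebesgue measure on [0,∞). For a measurable function f belonging to both L_p[0,∞) and L_q[0,∞), set ‖f‖ = max(‖f‖_{L_p}, ‖f‖_{L_q}). Then the following are equivalent: (a) r ≤ min{p,q}; (b) there exists a constant C > 0 such that every sequence {f_n} of functions with f_n ∈ L_p ∩ L_q, ‖f_n‖ = 1, and pairwise almost everywhere disjoint supports (f_i · f_j = 0 a.e. for i ≠ j) has a subsequence {f_{n_k}} satisfying ‖Σ_{k=1}^m a_k f_{n_k}‖ ≤ C (Σ_{k=1}^m |a_k|^r)^{1/r} for all scalars a_1,…,a_m and all m. -/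
/-! If the `f_k` are pairwise disjoint then `|∑ a_k f_k|^s = ∑ |a_k f_k|^s` pointwise, so
`‖∑ a_k f_k‖_s^s = ∑ |a_k|^s ‖f_k‖_s^s`. For `‖f_k‖_s ≤ 1` and `r ≤ s` this is at most
`∑ |a_k|^s ≤ (∑ |a_k|^r)^{s/r}`; taking `s = p` and `s = q` shows that when `r ≤ min p q` every
normalized disjoint sequence itself has an upper `r`-estimate with constant `1`.

Conversely, the indicators of the intervals `[n, n+1)` are normalized and disjoint, and any `m`
of them sum to a function of norm `max (m^{1/p}, m^{1/q})`. An upper `r`-estimate bounds this by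
`C m^{1/r}` for every `m`, which forces `1/p ≤ 1/r` and `1/q ≤ 1/r`. -/

open MeasureTheory Finset

/-- Lebesgue measure on `[0,∞)`. -/
noncomputable def muHalfLine : Measure ℝ := volume.restrict (Set.Ici (0 : ℝ))

/-- Membership in `L_p[0,∞) ∩ L_q[0,∞)`. -/
def MemLpCapLq (p q : ℝ) (f : ℝ → ℝ) : Prop :=
  MemLp f (ENNReal.ofReal p) muHalfLine ∧ MemLp f (ENNReal.ofReal q) muHalfLine

/-- The norm of `L_p[0,∞) ∩ L_q[0,∞)`: `‖f‖ = max (‖f‖_{L_p}, ‖f‖_{L_q})`. -/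
noncomputable def capNorm (p q : ℝ) (f : ℝ → ℝ) : ℝ :=
  max (eLpNorm f (ENNReal.ofReal p) muHalfLine).toReal
      (eLpNorm f (ENNReal.ofReal q) muHalfLine).toReal

open Filter Function
open scoped ENNReal NNReal

theorem eventually_pairwise_of_pairwise {ι α : Type*} [Countable ι] {l : Filter α}
    [CountableInterFilter l] {P : ι → ι → α → Prop} (h : Pairwise fun i j => ∀ᶠ a in l, P i j a) :
    ∀ᶠ a in l, Pairwise fun i j => P i j a := by
  simpa only [Pairwise, eventually_countable_forall, eventually_imp_distrib_left] using h

theorem ENNReal.sum_rpow_le_rpow_sum {ι : Type*} {t : ℝ} (ht : 1 ≤ t) (s : Finset ι)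
    (c : ι → ℝ≥0∞) : ∑ i ∈ s, c i ^ t ≤ (∑ i ∈ s, c i) ^ t := by
  classical
  induction s using Finset.induction_on with
  | empty => simp [ENNReal.zero_rpow_of_pos (zero_lt_one.trans_le ht)]
  | insert i s hi ih =>
    rw [sum_insert hi, sum_insert hi]
    exact (add_le_add_right ih _).trans (ENNReal.add_rpow_le_rpow_add _ _ ht)

section Disjoint

variable {ι α : Type*} [MeasurableSpace α] {μ : Measure α}

theorem enorm_sum_rpow_of_pairwise_mul_eq_zero {R : Type*} [NormedRing R] [NoZeroDivisors R]
    {t : ℝ} (ht : 0 < t) {x : ι → R} (hx : Pairwise fun i j => x i * x j = 0) (s : Finset ι) :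
    ‖∑ i ∈ s, x i‖ₑ ^ t = ∑ i ∈ s, ‖x i‖ₑ ^ t := by
  by_cases h : ∃ i ∈ s, x i ≠ 0
  · obtain ⟨i, hi, hxi⟩ := h
    have hzero : ∀ j ∈ s, j ≠ i → x j = 0 := fun j _ hji =>
      (mul_eq_zero.1 (hx hji.symm)).resolve_left hxi
    rw [sum_eq_single_of_mem i hi hzero, sum_eq_single_of_mem i hi fun j hj hji => by
      simp [hzero j hj hji, ENNReal.zero_rpow_of_pos ht]]
  · push Not at h
    rw [sum_eq_zero h, sum_eq_zero fun i hi => by simp [h i hi, ENNReal.zero_rpow_of_pos ht]]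
    simp [ENNReal.zero_rpow_of_pos ht]

theorem eLpNorm_sum_rpow_of_pairwise_mul_eq_zero {R : Type*} [NormedRing R] [NoZeroDivisors R]
    {p : ℝ≥0} (hp : p ≠ 0) {g : ι → α → R} (hg : ∀ i, AEStronglyMeasurable (g i) μ)
    (hdisj : ∀ᵐ a ∂μ, Pairwise fun i j => g i a * g j a = 0) (s : Finset ι) :
    eLpNorm (fun a => ∑ i ∈ s, g i a) p μ ^ (p : ℝ) = ∑ i ∈ s, eLpNorm (g i) p μ ^ (p : ℝ) := by
  simp only [eLpNorm_nnreal_pow_eq_lintegral hp]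
  rw [← lintegral_finsetSum' _ fun i _ => (hg i).enorm.pow_const _]
  exact lintegral_congr_ae (hdisj.mono fun a ha =>
    enorm_sum_rpow_of_pairwise_mul_eq_zero (by positivity) ha s)

theorem eLpNorm_sum_mul_le_of_pairwise_mul_eq_zero {𝕜 : Type*} [NormedField 𝕜] {p : ℝ≥0}
    {r : ℝ} (hr : 0 < r) (hrp : r ≤ p) {f : ι → α → 𝕜} (hf : ∀ i, AEStronglyMeasurable (f i) μ)
    (hf1 : ∀ i, eLpNorm (f i) p μ ≤ 1) (hdisj : ∀ᵐ a ∂μ, Pairwise fun i j => f i a * f j a = 0)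
    (s : Finset ι) (c : ι → 𝕜) :
    eLpNorm (fun a => ∑ i ∈ s, c i * f i a) p μ ≤ (∑ i ∈ s, ‖c i‖ₑ ^ r) ^ (1 / r) := by
  have hp : (0 : ℝ) < p := hr.trans_le hrp
  have hpow : eLpNorm (fun a => ∑ i ∈ s, c i * f i a) p μ ^ (p : ℝ)
      ≤ (∑ i ∈ s, ‖c i‖ₑ ^ r) ^ ((p : ℝ) / r) := calc
    _ = ∑ i ∈ s, (‖c i‖ₑ * eLpNorm (f i) p μ) ^ (p : ℝ) := by
      rw [eLpNorm_sum_rpow_of_pairwise_mul_eq_zero (NNReal.coe_pos.1 hp).ne'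
        (fun i => (hf i).const_mul (c i))
        (hdisj.mono fun a ha i j hij =>
          show _ * _ * (_ * _) = 0 by rw [mul_mul_mul_comm, ha hij, mul_zero])]
      simp only [← eLpNorm_const_smul]
      rfl
    _ ≤ ∑ i ∈ s, (‖c i‖ₑ ^ r) ^ ((p : ℝ) / r) := by
      gcongr with i
      rw [← ENNReal.rpow_mul, mul_div_cancel₀ _ hr.ne']
      exact ENNReal.rpow_le_rpow (mul_le_of_le_one_right' (hf1 i)) hp.le
    _ ≤ _ := ENNReal.sum_rpow_le_rpow_sum ((one_le_div hr).2 hrp) _ _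
  calc _ = (eLpNorm (fun a => ∑ i ∈ s, c i * f i a) p μ ^ (p : ℝ)) ^ (1 / (p : ℝ)) := by
        rw [← ENNReal.rpow_mul, mul_one_div_cancel hp.ne', ENNReal.rpow_one]
    _ ≤ ((∑ i ∈ s, ‖c i‖ₑ ^ r) ^ ((p : ℝ) / r)) ^ (1 / (p : ℝ)) := by gcongr
    _ = _ := by
      rw [← ENNReal.rpow_mul]
      congr 1
      field_simp

theorem toReal_eLpNorm_sum_mul_le_of_pairwise_mul_eq_zero {p : ℝ≥0} {r : ℝ} (hr : 0 < r)
    (hrp : r ≤ p) {f : ι → α → ℝ} (hf : ∀ i, AEStronglyMeasurable (f i) μ)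
    (hf1 : ∀ i, eLpNorm (f i) p μ ≤ 1) (hdisj : ∀ᵐ a ∂μ, Pairwise fun i j => f i a * f j a = 0)
    (s : Finset ι) (c : ι → ℝ) :
    (eLpNorm (fun a => ∑ i ∈ s, c i * f i a) p μ).toReal ≤ (∑ i ∈ s, |c i| ^ r) ^ (1 / r) := by
  refine ENNReal.toReal_le_of_le_ofReal (by positivity)
    ((eLpNorm_sum_mul_le_of_pairwise_mul_eq_zero hr hrp hf hf1 hdisj s c).trans_eq ?_)
  rw [← ENNReal.ofReal_rpow_of_nonneg (by positivity) (by positivity),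
    ENNReal.ofReal_sum_of_nonneg fun i _ => by positivity]
  simp only [Real.enorm_eq_ofReal_abs, ENNReal.ofReal_rpow_of_nonneg (abs_nonneg _) hr.le]

end Disjoint

theorem le_of_forall_natCast_rpow_le_mul_rpow {a b C : ℝ}
    (h : ∀ m : ℕ, (m : ℝ) ^ a ≤ C * (m : ℝ) ^ b) : a ≤ b := by
  by_contra! hba
  obtain ⟨m, hmC, hm1⟩ := (((tendsto_rpow_atTop (sub_pos.2 hba)).comp
    tendsto_natCast_atTop_atTop).eventually_gt_atTop C).and (eventually_ge_atTop 1) |>.exists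
  have hm : (0 : ℝ) < m := by exact_mod_cast hm1
  have hma := h m
  rw [← sub_add_cancel a b, Real.rpow_add hm] at hma
  exact (mul_lt_mul_of_pos_right hmC (Real.rpow_pos_of_pos hm b)).not_ge hma

theorem eLpNorm_le_one_of_capNorm_le_one {p q : ℝ} {f : ℝ → ℝ} (hf : MemLpCapLq p q f)
    (hf1 : capNorm p q f ≤ 1) :
    eLpNorm f (ENNReal.ofReal p) muHalfLine ≤ 1 ∧ eLpNorm f (ENNReal.ofReal q) muHalfLine ≤ 1 :=
  ⟨(ENNReal.toReal_le_toReal hf.1.eLpNorm_ne_top ENNReal.one_ne_top).1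
      (by simpa using (le_max_left _ _).trans hf1),
    (ENNReal.toReal_le_toReal hf.2.eLpNorm_ne_top ENNReal.one_ne_top).1
      (by simpa using (le_max_right _ _).trans hf1)⟩

theorem capNorm_sum_mul_le {p q r : ℝ} (hr : 0 < r) (hrpq : r ≤ min p q) {f : ℕ → ℝ → ℝ}
    (hf : ∀ n, MemLpCapLq p q (f n)) (hf1 : ∀ n, capNorm p q (f n) ≤ 1)
    (hdisj : ∀ i j, i ≠ j → ∀ᵐ t ∂muHalfLine, f i t * f j t = 0) (m : ℕ) (a : ℕ → ℝ) :
    capNorm p q (fun t => ∑ k ∈ range m, a k * f k t) ≤ (∑ k ∈ range m, |a k| ^ r) ^ (1 / r) := by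
  have hdisj' := eventually_pairwise_of_pairwise fun i j hij => hdisj i j hij
  exact max_le
    (toReal_eLpNorm_sum_mul_le_of_pairwise_mul_eq_zero hr
      ((le_min_iff.1 hrpq).1.trans (Real.le_coe_toNNReal p))
      (fun n => (hf n).1.aestronglyMeasurable)
      (fun n => (eLpNorm_le_one_of_capNorm_le_one (hf n) (hf1 n)).1) hdisj' _ a)
    (toReal_eLpNorm_sum_mul_le_of_pairwise_mul_eq_zero hr
      ((le_min_iff.1 hrpq).2.trans (Real.le_coe_toNNReal q))
      (fun n => (hf n).2.aestronglyMeasurable)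
      (fun n => (eLpNorm_le_one_of_capNorm_le_one (hf n) (hf1 n)).2) hdisj' _ a)

noncomputable def intervalIndicator (n : ℕ) : ℝ → ℝ := (Set.Ico (n : ℝ) (n + 1)).indicator 1

theorem muHalfLine_Ico (n : ℕ) : muHalfLine (Set.Ico (n : ℝ) (n + 1)) = 1 := by
  rw [muHalfLine, Measure.restrict_apply measurableSet_Ico,
    Set.inter_eq_left.2 (Set.Ico_subset_Ici_self.trans (Set.Ici_subset_Ici.2 n.cast_nonneg)),
    Real.volume_Ico]
  simp

theorem eLpNorm_intervalIndicator {p : ℝ≥0∞} (hp : p ≠ 0) (n : ℕ) :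
    eLpNorm (intervalIndicator n) p muHalfLine = 1 := by
  rw [intervalIndicator, Pi.one_def,
    eLpNorm_indicator_const' measurableSet_Ico (by simp [muHalfLine_Ico]) hp, muHalfLine_Ico]
  simp

theorem memLp_intervalIndicator (p : ℝ≥0∞) (n : ℕ) : MemLp (intervalIndicator n) p muHalfLine :=
  memLp_indicator_const _ measurableSet_Ico 1 (Or.inr (by simp [muHalfLine_Ico]))

theorem intervalIndicator_mul_intervalIndicator {i j : ℕ} (hij : i ≠ j) (t : ℝ) :
    intervalIndicator i t * intervalIndicator j t = 0 := by
  have hdisj := Set.pairwise_disjoint_Ico_intCast ℝ (Nat.cast_injective.ne hij : (i : ℤ) ≠ j)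
  simp only [onFun, Int.cast_natCast] at hdisj
  rw [intervalIndicator, intervalIndicator, ← Pi.mul_apply, ← Set.inter_indicator_one,
    hdisj.inter_eq, Set.indicator_empty]

theorem toReal_eLpNorm_sum_intervalIndicator {p : ℝ} (hp : 0 < p) {φ : ℕ → ℕ} (hφ : Injective φ)
    (s : Finset ℕ) :
    (eLpNorm (fun t => ∑ k ∈ s, intervalIndicator (φ k) t) (ENNReal.ofReal p) muHalfLine).toReal
      = (#s : ℝ) ^ (1 / p) := by
  have hp' : p.toNNReal ≠ 0 := by simpa using hp
  have hpow : eLpNorm (fun t => ∑ k ∈ s, intervalIndicator (φ k) t) (ENNReal.ofReal p)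
      muHalfLine ^ p = #s := by
    have h := eLpNorm_sum_rpow_of_pairwise_mul_eq_zero hp'
      (fun k => (memLp_intervalIndicator (p.toNNReal : ℝ≥0∞) (φ k)).aestronglyMeasurable)
      (.of_forall fun t i j hij => intervalIndicator_mul_intervalIndicator (hφ.ne hij) t) s
      (μ := muHalfLine)
    simp only [eLpNorm_intervalIndicator (ENNReal.coe_ne_zero.2 hp'), ENNReal.one_rpow, sum_const,
      nsmul_one, Real.coe_toNNReal _ hp.le] at h
    exact h
  rw [← ENNReal.rpow_rpow_inv hp.ne' (eLpNorm _ _ _), hpow, ← ENNReal.toReal_rpow, one_div]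
  simp

theorem capNorm_intervalIndicator {p q : ℝ} (hp : 0 < p) (hq : 0 < q) (n : ℕ) :
    capNorm p q (intervalIndicator n) = 1 := by
  simp [capNorm, eLpNorm_intervalIndicator, hp, hq]

theorem capNorm_sum_intervalIndicator {p q : ℝ} (hp : 0 < p) (hq : 0 < q) {φ : ℕ → ℕ}
    (hφ : Injective φ) (s : Finset ℕ) :
    capNorm p q (fun t => ∑ k ∈ s, intervalIndicator (φ k) t)
      = max ((#s : ℝ) ^ (1 / p)) ((#s : ℝ) ^ (1 / q)) := by
  rw [capNorm, toReal_eLpNorm_sum_intervalIndicator hp hφ,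
    toReal_eLpNorm_sum_intervalIndicator hq hφ]

/-- Corollary 2(i) for `L_p ∩ L_q` on `[0,∞)`: the space has the `UDS_r`-property iff
`r ≤ min {p, q}`. -/
theorem statement8 (p q r : ℝ) (hp : 1 < p) (hq : 1 < q) (hr : 1 < r) :
    r ≤ min p q ↔
    ∃ C : ℝ, 0 < C ∧ ∀ f : ℕ → ℝ → ℝ,
      (∀ n, MemLpCapLq p q (f n)) →
      (∀ n, capNorm p q (f n) = 1) →
      (∀ i j, i ≠ j → ∀ᵐ t ∂muHalfLine, f i t * f j t = 0) →
      ∃ φ : ℕ → ℕ, StrictMono φ ∧ ∀ (m : ℕ) (a : ℕ → ℝ),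
        capNorm p q (fun t => ∑ k ∈ Finset.range m, a k * f (φ k) t)
          ≤ C * (∑ k ∈ Finset.range m, |a k| ^ r) ^ (1 / r) := by
  have hp0 : 0 < p := one_pos.trans hp
  have hq0 : 0 < q := one_pos.trans hq
  have hr0 : 0 < r := one_pos.trans hr
  constructor
  · intro hrpq
    refine ⟨1, one_pos, fun f hf hf1 hdisj => ⟨id, strictMono_id, fun m a => ?_⟩⟩
    rw [one_mul]
    exact capNorm_sum_mul_le hr0 hrpq hf (fun n => (hf1 n).le) hdisj m a
  · rintro ⟨C, -, hC⟩
    obtain ⟨φ, hφ, hφC⟩ := hC intervalIndicator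
      (fun n => ⟨memLp_intervalIndicator _ n, memLp_intervalIndicator _ n⟩)
      (capNorm_intervalIndicator hp0 hq0)
      fun i j hij => .of_forall (intervalIndicator_mul_intervalIndicator hij)
    have hgrowth (m : ℕ) :
        max ((m : ℝ) ^ (1 / p)) ((m : ℝ) ^ (1 / q)) ≤ C * (m : ℝ) ^ (1 / r) := by
      simpa [capNorm_sum_intervalIndicator hp0 hq0 hφ.injective] using hφC m fun _ => 1
    have hrp := le_of_forall_natCast_rpow_le_mul_rpow fun m => (le_max_left _ _).trans (hgrowth m)
    have hrq := le_of_forall_natCast_rpow_le_mul_rpow fun m => (le_max_right _ _).trans (hgrowth m)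
    exact le_min ((one_div_le_one_div hp0 hr0).1 hrp) ((one_div_le_one_div hq0 hr0).1 hrq)
end

section
/- Let 1 < p, q < ∞ and 1 < r < ∞, and consider Lebesgue measure on [0,∞). For a measurable function f belonging to both L_p[0,∞) and L_q[0,∞), set ‖f‖ = max(‖f‖_{L_p}, ‖f‖_{L_q}). Then the following are equivalent: (a) r ≥ max{p,q}; (b) there exists a constant C > 0 such that every sequence {f_n} of functions with f_n ∈ L_p ∩ L_q, ‖f_n‖ = 1, and pairwise almost everywhere disjoint supports (f_i · f_j = 0 a.e. for i ≠ j) has a subsequence {f_{n_k}} satisfying C (Σ_{k=1}^m |a_k|^r)^{1/r} ≤ ‖Σ_{k=1}^m a_k f_{n_k}‖ for all scalars a_1,…,a_m and all m. -/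
/-! If `max p q ≤ r`, every normalized `f n` has `L_p`-norm `1` or `L_q`-norm `1`, so along a
subsequence all `f n` are normalized in one `L_u` with `u ≤ r`. For disjoint functions
`‖∑ a_k f_k‖_u = (∑ |a_k| ^ u) ^ (1/u) ≥ (∑ |a_k| ^ r) ^ (1/r)`,
a lower `r`-estimate with `C = 1`.

Conversely, on `[0,1]` Lebesgue measure is a probability measure, so there the norm of
`L_p ∩ L_q` is the `L_s`-norm with `s = max p q`. The `L_s`-normalized indicators of disjoint
intervals in `[0,1]` satisfy `‖∑_{k<m} f_{n_k}‖ = m ^ (1/s)` along every subsequence, which is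
incompatible with a lower bound `C m ^ (1/r)` when `r < s`. -/

open MeasureTheory Finset

open Filter Function
open scoped ENNReal

namespace Real

theorem sum_rpow_le_rpow_sum {ι : Type*} (s : Finset ι) {x : ι → ℝ}
    (hx : ∀ i ∈ s, 0 ≤ x i)
    {θ : ℝ} (hθ : 1 ≤ θ) : ∑ i ∈ s, x i ^ θ ≤ (∑ i ∈ s, x i) ^ θ := by
  induction s using Finset.cons_induction with
  | empty => simp [zero_rpow (by linarith : θ ≠ 0)]
  | cons a s ha ih =>
    rw [forall_mem_cons] at hx
    rw [sum_cons, sum_cons]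
    calc x a ^ θ + ∑ i ∈ s, x i ^ θ ≤ x a ^ θ + (∑ i ∈ s, x i) ^ θ := by
          gcongr; exact ih hx.2
      _ ≤ (x a + ∑ i ∈ s, x i) ^ θ := add_rpow_le_rpow_add hx.1 (sum_nonneg hx.2) hθ

theorem rpow_sum_rpow_le_of_le {ι : Type*} (s : Finset ι) {x : ι → ℝ}
    (hx : ∀ i ∈ s, 0 ≤ x i)
    {u r : ℝ} (hu : 0 < u) (hur : u ≤ r) :
    (∑ i ∈ s, x i ^ r) ^ (1 / r) ≤ (∑ i ∈ s, x i ^ u) ^ (1 / u) := by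
  have hr : 0 < r := hu.trans_le hur
  have hsum := sum_rpow_le_rpow_sum s (fun i hi => rpow_nonneg (hx i hi) u)
    ((one_le_div hu).2 hur)
  rw [sum_congr rfl fun i hi => by rw [← rpow_mul (hx i hi), mul_div_cancel₀ _ hu.ne']] at hsum
  calc (∑ i ∈ s, x i ^ r) ^ (1 / r) ≤ ((∑ i ∈ s, x i ^ u) ^ (r / u)) ^ (1 / r) :=
        rpow_le_rpow (sum_nonneg fun i hi => rpow_nonneg (hx i hi) r) hsum (by positivity)
    _ = (∑ i ∈ s, x i ^ u) ^ (1 / u) := by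
      rw [← rpow_mul (sum_nonneg fun i hi => rpow_nonneg (hx i hi) u)]
      congr 1
      field_simp

end Real

theorem Finset.map_sum_of_pairwise_mul_eq_zero {ι M : Type*} [AddCommMonoid M] (F : ℝ → M)
    (hF : F 0 = 0) {s : Finset ι} {x : ι → ℝ}
    (hx : ∀ i ∈ s, ∀ j ∈ s, i ≠ j → x i * x j = 0) :
    F (∑ i ∈ s, x i) = ∑ i ∈ s, F (x i) := by
  by_cases h : ∃ k ∈ s, x k ≠ 0
  · obtain ⟨k, hk, hxk⟩ := h
    have hzero : ∀ j ∈ s, j ≠ k → x j = 0 := fun j hj hjk =>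
      (mul_eq_zero.1 (hx j hj k hk hjk)).resolve_right hxk
    rw [sum_eq_single_of_mem k hk hzero,
      sum_eq_single_of_mem k hk fun j hj hjk => by rw [hzero j hj hjk, hF]]
  · push Not at h
    rw [sum_eq_zero h, hF, sum_eq_zero fun i hi => by rw [h i hi, hF]]

namespace MeasureTheory

section DisjointSum

variable {ι α : Type*} [MeasurableSpace α] {μ : Measure α} {p : ℝ} {f : ι → α → ℝ}

theorem eLpNorm_ofReal_rpow_eq_lintegral (hp : 0 < p) (g : α → ℝ) :
    eLpNorm g (ENNReal.ofReal p) μ ^ p = ∫⁻ t, ‖g t‖ₑ ^ p ∂μ := by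
  simpa [ENNReal.ofReal, hp.le] using
    eLpNorm_nnreal_pow_eq_lintegral (μ := μ) (f := g) (p := p.toNNReal) (by simpa using hp)

theorem eLpNorm_sum_rpow_of_ae_disjoint (hp : 0 < p) (hf : ∀ i, AEMeasurable (f i) μ)
    (hdisj : ∀ i j, i ≠ j → ∀ᵐ t ∂μ, f i t * f j t = 0) (s : Finset ι) :
    eLpNorm (fun t => ∑ i ∈ s, f i t) (ENNReal.ofReal p) μ ^ p
      = ∑ i ∈ s, eLpNorm (f i) (ENNReal.ofReal p) μ ^ p := by
  have hae : ∀ᵐ t ∂μ, ∀ i ∈ s, ∀ j ∈ s, i ≠ j → f i t * f j t = 0 := by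
    simp only [eventually_all_finset, eventually_imp_distrib_left]
    exact fun i _ j _ => hdisj i j
  simp only [eLpNorm_ofReal_rpow_eq_lintegral hp]
  rw [← lintegral_finsetSum' _ fun i _ => (hf i).enorm.pow_const p]
  refine lintegral_congr_ae (hae.mono fun t ht => ?_)
  exact map_sum_of_pairwise_mul_eq_zero (fun y => ‖y‖ₑ ^ p) (by simp [hp]) ht

theorem eLpNorm_sum_toReal_rpow_of_ae_disjoint (hp : 0 < p)
    (hf : ∀ i, MemLp (f i) (ENNReal.ofReal p) μ)
    (hdisj : ∀ i j, i ≠ j → ∀ᵐ t ∂μ, f i t * f j t = 0) (s : Finset ι) :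
    (eLpNorm (fun t => ∑ i ∈ s, f i t) (ENNReal.ofReal p) μ).toReal ^ p
      = ∑ i ∈ s, (eLpNorm (f i) (ENNReal.ofReal p) μ).toReal ^ p := by
  rw [ENNReal.toReal_rpow, eLpNorm_sum_rpow_of_ae_disjoint hp
      (fun i => (hf i).aestronglyMeasurable.aemeasurable) hdisj,
    ENNReal.toReal_sum fun i _ => ENNReal.rpow_ne_top_of_nonneg hp.le (hf i).eLpNorm_ne_top]
  simp only [ENNReal.toReal_rpow]

theorem rpow_sum_abs_rpow_le_eLpNorm_sum {r : ℝ} (hp : 0 < p) (hpr : p ≤ r)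
    (hf : ∀ i, MemLp (f i) (ENNReal.ofReal p) μ)
    (hnorm : ∀ i, (eLpNorm (f i) (ENNReal.ofReal p) μ).toReal = 1)
    (hdisj : ∀ i j, i ≠ j → ∀ᵐ t ∂μ, f i t * f j t = 0)
    (s : Finset ι) (a : ι → ℝ) :
    (∑ i ∈ s, |a i| ^ r) ^ (1 / r)
      ≤ (eLpNorm (fun t => ∑ i ∈ s, a i * f i t) (ENNReal.ofReal p) μ).toReal := by
  have hsum := eLpNorm_sum_toReal_rpow_of_ae_disjoint hp (f := fun i t => a i * f i t)
    (fun i => (hf i).const_mul (a i))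
    (fun i j hij => (hdisj i j hij).mono fun t ht => by rw [mul_mul_mul_comm, ht, mul_zero]) s
  have hterm : ∀ i, (eLpNorm (fun t => a i * f i t) (ENNReal.ofReal p) μ).toReal = |a i| := by
    intro i
    rw [show (fun t => a i * f i t) = a i • f i from rfl, eLpNorm_const_smul, ENNReal.toReal_mul,
      hnorm, toReal_enorm, Real.norm_eq_abs, mul_one]
  simp only [hterm] at hsum
  calc (∑ i ∈ s, |a i| ^ r) ^ (1 / r) ≤ (∑ i ∈ s, |a i| ^ p) ^ (1 / p) :=
        Real.rpow_sum_rpow_le_of_le s (fun i _ => abs_nonneg _) hp hpr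
    _ = _ := by
      rw [← hsum, ← Real.rpow_mul ENNReal.toReal_nonneg, mul_one_div_cancel hp.ne',
        Real.rpow_one]

end DisjointSum

theorem exists_strictMono_rpow_sum_le_eLpNorm_sum {α : Type*} [MeasurableSpace α]
    {μ : Measure α} {p r : ℝ} (hp : 0 < p) (hpr : p ≤ r) {f : ℕ → α → ℝ}
    (hf : ∀ n, MemLp (f n) (ENNReal.ofReal p) μ)
    (hdisj : ∀ i j, i ≠ j → ∀ᵐ t ∂μ, f i t * f j t = 0)
    (hfreq : ∃ᶠ n in atTop, (eLpNorm (f n) (ENNReal.ofReal p) μ).toReal = 1) :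
    ∃ φ : ℕ → ℕ, StrictMono φ ∧ ∀ (m : ℕ) (a : ℕ → ℝ),
      (∑ k ∈ range m, |a k| ^ r) ^ (1 / r)
        ≤ (eLpNorm (fun t => ∑ k ∈ range m, a k * f (φ k) t)
            (ENNReal.ofReal p) μ).toReal := by
  obtain ⟨φ, hφ, hnorm⟩ := extraction_of_frequently_atTop hfreq
  exact ⟨φ, hφ, fun m a => rpow_sum_abs_rpow_le_eLpNorm_sum hp hpr (fun k => hf (φ k)) hnorm
    (fun i j hij => hdisj _ _ (hφ.injective.ne hij)) (range m) a⟩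

theorem eLpNorm_indicator_rpow_neg_inv {α : Type*} [MeasurableSpace α]
    {μ : Measure α} {s : Set α} (hs : MeasurableSet s) (h0 : μ s ≠ 0) (htop : μ s ≠ ∞)
    {q : ℝ} (hq : 0 < q) :
    eLpNorm (s.indicator fun _ => (μ s).toReal ^ (-q⁻¹)) (ENNReal.ofReal q) μ = 1 := by
  have hpos : 0 < (μ s).toReal := ENNReal.toReal_pos h0 htop
  rw [eLpNorm_indicator_const hs (by simpa using hq) ENNReal.ofReal_ne_top,
    ENNReal.toReal_ofReal hq.le, Real.enorm_eq_ofReal (by positivity)]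
  nth_rw 2 [← ENNReal.ofReal_toReal htop]
  rw [ENNReal.ofReal_rpow_of_nonneg hpos.le (by positivity), ← ENNReal.ofReal_mul (by positivity),
    ← Real.rpow_add hpos, one_div, neg_add_cancel, Real.rpow_zero, ENNReal.ofReal_one]

end MeasureTheory

def HasUDT (p q r C : ℝ) : Prop :=
  ∀ f : ℕ → ℝ → ℝ,
    (∀ n, MemLpCapLq p q (f n)) →
    (∀ n, capNorm p q (f n) = 1) →
    (∀ i j, i ≠ j → ∀ᵐ t ∂muHalfLine, f i t * f j t = 0) →
    ∃ φ : ℕ → ℕ, StrictMono φ ∧ ∀ (m : ℕ) (a : ℕ → ℝ),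
      C * (∑ k ∈ Finset.range m, |a k| ^ r) ^ (1 / r)
        ≤ capNorm p q (fun t => ∑ k ∈ Finset.range m, a k * f (φ k) t)

theorem hasUDT_one_of_max_le {p q r : ℝ} (hp : 0 < p) (hq : 0 < q) (hpqr : max p q ≤ r) :
    HasUDT p q r 1 := by
  intro f hmem hnorm hdisj
  have hfreq : ∃ᶠ n in atTop, (eLpNorm (f n) (ENNReal.ofReal p) muHalfLine).toReal = 1 ∨
      (eLpNorm (f n) (ENNReal.ofReal q) muHalfLine).toReal = 1 :=
    Frequently.of_forall fun n => by
      rw [← hnorm n, capNorm]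
      exact (max_choice _ _).imp Eq.symm Eq.symm
  simp only [one_mul]
  rcases frequently_or_distrib.1 hfreq with hfreq | hfreq
  · obtain ⟨φ, hφ, hest⟩ := exists_strictMono_rpow_sum_le_eLpNorm_sum hp
      ((le_max_left p q).trans hpqr) (fun n => (hmem n).1) hdisj hfreq
    exact ⟨φ, hφ, fun m a => (hest m a).trans (le_max_left _ _)⟩
  · obtain ⟨φ, hφ, hest⟩ := exists_strictMono_rpow_sum_le_eLpNorm_sum hq
      ((le_max_right p q).trans hpqr) (fun n => (hmem n).2) hdisj hfreq
    exact ⟨φ, hφ, fun m a => (hest m a).trans (le_max_right _ _)⟩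

theorem muHalfLine_of_subset_Ici {s : Set ℝ} (hs : s ⊆ Set.Ici 0) : muHalfLine s = volume s :=
  Measure.restrict_eq_self _ hs

theorem muHalfLine_Icc_zero_one : muHalfLine (Set.Icc 0 1) = 1 := by
  simp [muHalfLine_of_subset_Ici Set.Icc_subset_Ici_self]

theorem eLpNorm_le_eLpNorm_of_support_subset_Icc {g : ℝ → ℝ}
    (hg : AEStronglyMeasurable g muHalfLine) (hsupp : g.support ⊆ Set.Icc 0 1)
    {p q : ℝ≥0∞} (hpq : p ≤ q) : eLpNorm g p muHalfLine ≤ eLpNorm g q muHalfLine := by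
  have : IsProbabilityMeasure (muHalfLine.restrict (Set.Icc 0 1)) :=
    ⟨by rw [Measure.restrict_apply_univ, muHalfLine_Icc_zero_one]⟩
  rw [← eLpNorm_restrict_eq_of_support_subset hsupp,
    ← eLpNorm_restrict_eq_of_support_subset (p := q) hsupp]
  exact eLpNorm_le_eLpNorm_of_exponent_le hpq hg.restrict

theorem capNorm_eq_of_support_subset_Icc {p q : ℝ} {g : ℝ → ℝ}
    (hg : MemLp g (ENNReal.ofReal (max p q)) muHalfLine) (hsupp : g.support ⊆ Set.Icc 0 1) :
    capNorm p q g = (eLpNorm g (ENNReal.ofReal (max p q)) muHalfLine).toReal := by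
  have hle {u v : ℝ} (huv : u ≤ v) (hv : MemLp g (ENNReal.ofReal v) muHalfLine) :
      (eLpNorm g (ENNReal.ofReal u) muHalfLine).toReal
        ≤ (eLpNorm g (ENNReal.ofReal v) muHalfLine).toReal :=
    ENNReal.toReal_mono hv.eLpNorm_ne_top <| eLpNorm_le_eLpNorm_of_support_subset_Icc
      hv.aestronglyMeasurable hsupp (ENNReal.ofReal_le_ofReal huv)
  rcases le_total p q with hpq | hqp
  · rw [max_eq_right hpq] at hg ⊢
    exact max_eq_right (hle hpq hg)
  · rw [max_eq_left hqp] at hg ⊢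
    exact max_eq_left (hle hqp hg)

def dyadicBlock (n : ℕ) : Set ℝ := Set.Ioc (2⁻¹ ^ (n + 1)) (2⁻¹ ^ n)

theorem pairwise_disjoint_dyadicBlock : Pairwise (Disjoint on dyadicBlock) :=
  Antitone.pairwise_disjoint_on_Ioc_succ <| pow_right_anti₀ (by norm_num) (by norm_num)

theorem dyadicBlock_subset_Icc (n : ℕ) : dyadicBlock n ⊆ Set.Icc 0 1 :=
  Set.Ioc_subset_Icc_self.trans <|
    Set.Icc_subset_Icc (by positivity) (pow_le_one₀ (by norm_num) (by norm_num))

theorem muHalfLine_dyadicBlock (n : ℕ) : muHalfLine (dyadicBlock n) = volume (dyadicBlock n) :=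
  muHalfLine_of_subset_Ici ((dyadicBlock_subset_Icc n).trans Set.Icc_subset_Ici_self)

theorem muHalfLine_dyadicBlock_ne_zero (n : ℕ) : muHalfLine (dyadicBlock n) ≠ 0 := by
  rw [muHalfLine_dyadicBlock, dyadicBlock, Real.volume_Ioc]
  norm_num [pow_succ]

theorem muHalfLine_dyadicBlock_ne_top (n : ℕ) : muHalfLine (dyadicBlock n) ≠ ∞ := by
  rw [muHalfLine_dyadicBlock]
  exact measure_Ioc_lt_top.ne

noncomputable def normalizedBlock (s : ℝ) (n : ℕ) : ℝ → ℝ :=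
  (dyadicBlock n).indicator fun _ => (muHalfLine (dyadicBlock n)).toReal ^ (-s⁻¹)

theorem memLp_normalizedBlock (s : ℝ) (u : ℝ≥0∞) (n : ℕ) :
    MemLp (normalizedBlock s n) u muHalfLine :=
  memLp_indicator_const _ measurableSet_Ioc _ (Or.inr (muHalfLine_dyadicBlock_ne_top n))

theorem eLpNorm_normalizedBlock {s : ℝ} (hs : 0 < s) (n : ℕ) :
    eLpNorm (normalizedBlock s n) (ENNReal.ofReal s) muHalfLine = 1 :=
  eLpNorm_indicator_rpow_neg_inv measurableSet_Ioc (muHalfLine_dyadicBlock_ne_zero n)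
    (muHalfLine_dyadicBlock_ne_top n) hs

theorem support_normalizedBlock_subset (s : ℝ) (n : ℕ) :
    (normalizedBlock s n).support ⊆ Set.Icc 0 1 :=
  Set.support_indicator_subset.trans (dyadicBlock_subset_Icc n)

theorem normalizedBlock_mul_normalizedBlock {s : ℝ} {i j : ℕ} (hij : i ≠ j) (t : ℝ) :
    normalizedBlock s i t * normalizedBlock s j t = 0 := by
  by_cases ht : t ∈ dyadicBlock i
  · have htj := Set.disjoint_left.1 (pairwise_disjoint_dyadicBlock hij) ht
    rw [normalizedBlock, normalizedBlock, Set.indicator_of_notMem htj, mul_zero]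
  · rw [normalizedBlock, Set.indicator_of_notMem ht, zero_mul]

theorem eLpNorm_sum_normalizedBlock {s : ℝ} (hs : 0 < s) {φ : ℕ → ℕ} (hφ : φ.Injective)
    (m : ℕ) :
    (eLpNorm (fun t => ∑ k ∈ range m, normalizedBlock s (φ k) t) (ENNReal.ofReal s)
      muHalfLine).toReal = (m : ℝ) ^ (1 / s) := by
  have hsum := eLpNorm_sum_toReal_rpow_of_ae_disjoint hs
    (fun k => memLp_normalizedBlock s _ (φ k))
    (fun i j hij => ae_of_all _ (normalizedBlock_mul_normalizedBlock (hφ.ne hij))) (range m)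
  simp only [eLpNorm_normalizedBlock hs, ENNReal.toReal_one, Real.one_rpow, sum_const, card_range,
    nsmul_eq_mul, mul_one] at hsum
  rw [← hsum, ← Real.rpow_mul ENNReal.toReal_nonneg, mul_one_div_cancel hs.ne', Real.rpow_one]

theorem not_forall_mul_rpow_le_rpow {C r s : ℝ} (hC : 0 < C) (hr : 0 < r) (hrs : r < s) :
    ¬ ∀ m : ℕ, C * (m : ℝ) ^ (1 / r) ≤ (m : ℝ) ^ (1 / s) := by
  intro h
  have hlim : Tendsto (fun m : ℕ => (m : ℝ) ^ (1 / r - 1 / s)) atTop atTop :=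
    (tendsto_rpow_atTop (sub_pos.2 (one_div_lt_one_div_of_lt hr hrs))).comp
      tendsto_natCast_atTop_atTop
  obtain ⟨m, hm, hm1⟩ := ((hlim.eventually_gt_atTop C⁻¹).and (eventually_ge_atTop 1)).exists
  have hmpos : (0 : ℝ) < m := by exact_mod_cast hm1
  rw [Real.rpow_sub hmpos, lt_div_iff₀ (by positivity), inv_mul_lt_iff₀ hC] at hm
  exact (h m).not_gt hm

theorem max_le_of_hasUDT {p q r C : ℝ} (hp : 0 < p) (hr : 0 < r) (hC : 0 < C)
    (hUDT : HasUDT p q r C) : max p q ≤ r := by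
  by_contra! hrs
  have hs : 0 < max p q := lt_max_of_lt_left hp
  obtain ⟨φ, hφ, hest⟩ := hUDT (normalizedBlock (max p q))
    (fun n => ⟨memLp_normalizedBlock _ _ n, memLp_normalizedBlock _ _ n⟩)
    (fun n => by
      rw [capNorm_eq_of_support_subset_Icc (memLp_normalizedBlock _ _ n)
        (support_normalizedBlock_subset _ n), eLpNorm_normalizedBlock hs, ENNReal.toReal_one])
    (fun i j hij => ae_of_all _ (normalizedBlock_mul_normalizedBlock hij))
  refine not_forall_mul_rpow_le_rpow hC hr hrs fun m => ?_
  have hsupp : (fun t => ∑ k ∈ range m, normalizedBlock (max p q) (φ k) t).support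
      ⊆ Set.Icc 0 1 :=
    (support_sum _ _).trans (Set.iUnion₂_subset fun k _ => support_normalizedBlock_subset _ _)
  have h := hest m 1
  simp only [Pi.one_apply, abs_one, Real.one_rpow, sum_const, card_range, nsmul_eq_mul, mul_one,
    one_mul] at h
  rwa [capNorm_eq_of_support_subset_Icc
    (memLp_finsetSum (range m) fun k _ => memLp_normalizedBlock _ _ (φ k)) hsupp,
    eLpNorm_sum_normalizedBlock hs hφ.injective] at h

/-- Corollary 2(ii) for `L_p ∩ L_q` on `[0,∞)`: the space has the `UDT_r`-property iff
`r ≥ max {p, q}`. -/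
theorem statement9 (p q r : ℝ) (hp : 1 < p) (hq : 1 < q) (hr : 1 < r) :
    max p q ≤ r ↔
    ∃ C : ℝ, 0 < C ∧ ∀ f : ℕ → ℝ → ℝ,
      (∀ n, MemLpCapLq p q (f n)) →
      (∀ n, capNorm p q (f n) = 1) →
      (∀ i j, i ≠ j → ∀ᵐ t ∂muHalfLine, f i t * f j t = 0) →
      ∃ φ : ℕ → ℕ, StrictMono φ ∧ ∀ (m : ℕ) (a : ℕ → ℝ),
        C * (∑ k ∈ Finset.range m, |a k| ^ r) ^ (1 / r)
          ≤ capNorm p q (fun t => ∑ k ∈ Finset.range m, a k * f (φ k) t) := by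
  constructor
  · exact fun h => ⟨1, one_pos, hasUDT_one_of_max_le (by linarith) (by linarith) h⟩
  · rintro ⟨C, hC, hUDT⟩
    exact max_le_of_hasUDT (by linarith) (by linarith) hC hUDT
end
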